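/- arXiv:2311.15186 — 2 statements merged into one kernel-verified Lean document; each statement's English description precedes it below -/
import Mathlib

section
/- Let ρ : (0,1] → ℝ be a nonnegative measurable function such that r ↦ r³ρ(r) and r ↦ r ρ(r) are integrable on (0,1), and suppose there is r* ∈ (0,1] such that the map r ↦ r ρ(r) is nondecreasing on (0, r*] (Case II). Then for every δ > 0 and every k ∈ ℤ² \ {0} with δ|k| ≥ π, one has δ² λ_δ(k) ≥ min{ 4 (arccos(1/3) − π/3) ∫₀^{r*} r ρ(r) (1 − cos r) dr , π ∫_{r*/√2}^{r*} r ρ(r) dr , π ∫₀^{(3/7)r*} r ρ(r) dr }. -/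
/-!
Write `s = δ|k| ≥ π` and `g(r) = r ρ(r)`. Then `δ² λ_δ(k) = 4 ∫₀^{π/2} F(s cos θ) dθ` with
`F(ω) = ∫₀¹ g(r) (1 - cos rω) dr ≥ 0`, so it suffices to bound `F(s cos θ)` below on a window of
angles.

If `r* s ≤ 5π`, take `θ ∈ [β - C, β]` with `cos β = 1/s` and `C = arccos(1/3) - π/3`. There
`1 ≤ s cos θ ≤ 1 + sC`, so for `r ≤ r*` the phase `r s cos θ` stays in `[r, 2π - r]`, whence
`cos (r s cos θ) ≤ cos r` and `F(s cos θ) ≥ ∫₀^{r*} g(r) (1 - cos r) dr`.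

If `r* s > 5π`, take `θ ∈ [0, π/4]`, where the period `p = 2π/(s cos θ)` is at most `4r*/7`.
As `1 - cos` has mean one over a period and `g` is nondecreasing on `[0, r*]`, each period-long
block of `∫ g(r) (1 - cos (r s cos θ)) dr` dominates the block of `∫ g` one period to its left, so
`F(s cos θ) ≥ ∫₀^{r* - p} g ≥ ∫₀^{3r*/7} g`.
-/

open Real MeasureTheory

/-- Euclidean norm of a nonzero integer vector `k ∈ ℤ²`. -/
noncomputable def knorm2 (k : ℤ × ℤ) : ℝ :=
  Real.sqrt ((k.1 : ℝ) ^ 2 + (k.2 : ℝ) ^ 2)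

/-- The 2D Fourier symbol of the nonlocal diffusion operator:
`λ_δ(k) = (4/δ²) ∫₀^{π/2} ∫₀¹ r ρ(r) (1 − cos(r δ |k| cos θ)) dr dθ`. -/
noncomputable def lambdaDelta2 (ρ : ℝ → ℝ) (δ κ : ℝ) : ℝ :=
  (4 / δ ^ 2) * ∫ θ in (0:ℝ)..(π / 2), ∫ r in (0:ℝ)..1,
    r * ρ r * (1 - Real.cos (r * δ * κ * Real.cos θ))

open Set intervalIntegral

lemma cos_le_cos_of_le_of_le_two_pi_sub {r x : ℝ} (hr : 0 ≤ r) (h₁ : r ≤ x)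
    (h₂ : x ≤ 2 * π - r) : cos x ≤ cos r := by
  rcases le_or_gt x π with h | h
  · exact cos_le_cos_of_nonneg_of_le_pi hr h h₁
  · rw [← cos_two_pi_sub]
    exact cos_le_cos_of_nonneg_of_le_pi hr (by linarith) (by linarith)

lemma arccos_one_third_sub_pi_div_three_nonneg : 0 ≤ arccos (1 / 3) - π / 3 := by
  have h : arccos (1 / 2) = π / 3 := by
    rw [← cos_pi_div_three, arccos_cos (by positivity) (by linarith [pi_pos])]
  linarith [arccos_le_arccos (show (1 / 3 : ℝ) ≤ 1 / 2 by norm_num)]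

lemma arccos_one_third_sub_pi_div_three_le : arccos (1 / 3) - π / 3 ≤ π / 6 - 1 / 3 := by
  have h : (1 / 3 : ℝ) ≤ arcsin (1 / 3) := by
    have := sin_le (arcsin_nonneg.2 (by norm_num : (0 : ℝ) ≤ 1 / 3))
    rwa [sin_arcsin (by norm_num) (by norm_num)] at this
  rw [arccos_eq_pi_div_two_sub_arcsin]
  linarith

lemma mul_arccos_one_third_sub_pi_div_three_le {x : ℝ} (hx₀ : 0 ≤ x) (hx : x ≤ 5 * π) :
    x * (arccos (1 / 3) - π / 3) ≤ 2 * π - 2 := by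
  have hC := arccos_one_third_sub_pi_div_three_le
  have h : 5 * π * (π / 6 - 1 / 3) ≤ 2 * π - 2 := by nlinarith [pi_gt_three, pi_lt_d2]
  nlinarith [arccos_one_third_sub_pi_div_three_nonneg]

lemma MonotoneOn.Icc_of_Ioc {α β : Type*} [LinearOrder α] [Preorder β] {g : α → β} {a b : α}
    (hg : MonotoneOn g (Ioc a b)) (ha : ∀ x ∈ Ioc a b, g a ≤ g x) :
    MonotoneOn g (Icc a b) := by
  rintro x ⟨hax, hxb⟩ y ⟨hay, hyb⟩ hxy
  rcases hax.eq_or_lt with rfl | hax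
  · rcases hay.eq_or_lt with rfl | hay
    · exact le_rfl
    · exact ha y ⟨hay, hyb⟩
  · exact hg ⟨hax, hxb⟩ ⟨hax.trans_le hxy, hyb⟩ hxy

lemma integral_one_sub_cos_mul_period {ω : ℝ} (hω : ω ≠ 0) (u : ℝ) :
    ∫ r in u..u + 2 * π / ω, (1 - cos (r * ω)) = 2 * π / ω := by
  rw [integral_sub intervalIntegrable_const
      ((by fun_prop : Continuous fun r => cos (r * ω)).intervalIntegrable _ _),
    integral_comp_mul_right cos hω, integral_cos, add_mul, div_mul_cancel₀ _ hω, sin_add_two_pi]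
  simp

lemma MonotoneOn.integral_le_sub_mul {g : ℝ → ℝ} {a b : ℝ} (hab : a ≤ b)
    (hg : MonotoneOn g (Icc a b)) : ∫ r in a..b, g r ≤ (b - a) * g b := by
  calc ∫ r in a..b, g r ≤ ∫ _ in a..b, g b :=
        integral_mono_on hab (MonotoneOn.intervalIntegrable (by rwa [uIcc_of_le hab]))
          intervalIntegrable_const fun r hr => hg hr ⟨hab, le_rfl⟩ hr.2
    _ = (b - a) * g b := by simp

lemma MonotoneOn.mul_le_integral_mul_one_sub_cos {g : ℝ → ℝ} {ω u : ℝ} (hω : 0 < ω)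
    (hg : MonotoneOn g (Icc u (u + 2 * π / ω))) :
    2 * π / ω * g u ≤ ∫ r in u..u + 2 * π / ω, g r * (1 - cos (r * ω)) := by
  have hu : u ≤ u + 2 * π / ω := by linarith [show 0 < 2 * π / ω by positivity]
  calc 2 * π / ω * g u = ∫ r in u..u + 2 * π / ω, g u * (1 - cos (r * ω)) := by
        rw [intervalIntegral.integral_const_mul, integral_one_sub_cos_mul_period hω.ne', mul_comm]
    _ ≤ ∫ r in u..u + 2 * π / ω, g r * (1 - cos (r * ω)) :=
        integral_mono_on hu (Continuous.intervalIntegrable (by fun_prop) _ _)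
          ((MonotoneOn.intervalIntegrable (by rwa [uIcc_of_le hu])).mul_continuousOn (by fun_prop))
          fun r hr => mul_le_mul_of_nonneg_right (hg ⟨le_rfl, hu⟩ hr hr.1)
            (by linarith [cos_le_one (r * ω)])

theorem MonotoneOn.integral_le_integral_mul_one_sub_cos {g : ℝ → ℝ} {ω T u : ℝ} (hω : 0 < ω)
    (hg : MonotoneOn g (Icc 0 T)) (hg0 : 0 ≤ g 0) (hu : 0 ≤ u) (huT : u + 2 * π / ω ≤ T) :
    ∫ r in (0:ℝ)..u, g r ≤ ∫ r in (0:ℝ)..u + 2 * π / ω, g r * (1 - cos (r * ω)) := by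
  set p := 2 * π / ω
  have hp : 0 < p := by positivity
  set h := fun r => g r * (1 - cos (r * ω))
  have hg_sub {a b : ℝ} (ha : 0 ≤ a) (hb : b ≤ T) : MonotoneOn g (Icc a b) :=
    hg.mono (Icc_subset_Icc ha hb)
  have hg_int {a b : ℝ} (ha : 0 ≤ a) (hab : a ≤ b) (hb : b ≤ T) :
      IntervalIntegrable g volume a b :=
    MonotoneOn.intervalIntegrable (by rw [uIcc_of_le hab]; exact hg_sub ha hb)
  have hg_nonneg {r : ℝ} (hr : r ∈ Icc 0 T) : 0 ≤ g r :=
    hg0.trans (hg ⟨le_rfl, hr.1.trans hr.2⟩ hr hr.1)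
  have hperiod {u : ℝ} (hu : 0 ≤ u) (huT : u + p ≤ T) :
      (∫ r in (0:ℝ)..u, h r) + p * g u ≤ ∫ r in (0:ℝ)..u + p, h r := by
    have hh_int {a b : ℝ} (ha : 0 ≤ a) (hab : a ≤ b) (hb : b ≤ T) :
        IntervalIntegrable h volume a b :=
      (hg_int ha hab hb).mul_continuousOn (by fun_prop)
    rw [← integral_add_adjacent_intervals (hh_int le_rfl hu (by linarith))
      (hh_int hu (by linarith) huT)]
    gcongr
    exact (hg_sub hu huT).mul_le_integral_mul_one_sub_cos hω
  have hshort {u : ℝ} (hu : 0 ≤ u) (hup : u ≤ p) (huT : u + p ≤ T) :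
      ∫ r in (0:ℝ)..u, g r ≤ ∫ r in (0:ℝ)..u + p, h r := by
    have hh : 0 ≤ ∫ r in (0:ℝ)..u, h r := integral_nonneg hu fun r hr =>
      mul_nonneg (hg_nonneg ⟨hr.1, by linarith [hr.2]⟩) (by linarith [cos_le_one (r * ω)])
    have hgu : 0 ≤ g u := hg_nonneg ⟨hu, by linarith⟩
    calc ∫ r in (0:ℝ)..u, g r ≤ (u - 0) * g u :=
          (hg_sub le_rfl (by linarith)).integral_le_sub_mul hu
      _ ≤ (∫ r in (0:ℝ)..u, h r) + p * g u := by nlinarith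
      _ ≤ _ := hperiod hu huT
  suffices ∀ n : ℕ, ∀ u, 0 ≤ u → u ≤ n * p → u + p ≤ T →
      ∫ r in (0:ℝ)..u, g r ≤ ∫ r in (0:ℝ)..u + p, h r from
    this ⌈u / p⌉₊ u hu (by rw [← div_le_iff₀ hp]; exact Nat.le_ceil _) huT
  intro n
  induction n with
  | zero => exact fun u hu hun huT => hshort hu (by simp at hun; linarith) huT
  | succ n ih =>
    intro u hu hun huT
    rcases le_or_gt u p with hup | hup
    · exact hshort hu hup huT
    calc ∫ r in (0:ℝ)..u, g r = (∫ r in (0:ℝ)..u - p, g r) + ∫ r in u - p..u, g r :=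
          (integral_add_adjacent_intervals (hg_int le_rfl (by linarith) (by linarith))
            (hg_int (by linarith) (by linarith) (by linarith))).symm
      _ ≤ (∫ r in (0:ℝ)..u, h r) + p * g u := by
        gcongr
        · simpa using ih (u - p) (by linarith) (by push_cast at hun; linarith) (by linarith)
        · simpa using (hg_sub (a := u - p) (b := u) (by linarith) (by linarith)).integral_le_sub_mul
            (by linarith)
      _ ≤ _ := hperiod hu huT

/-- The inner integral of `lambdaDelta2`, as a function of the frequency `ω = δ |k| cos θ`. -/
noncomputable def radialSymbol (ρ : ℝ → ℝ) (ω : ℝ) : ℝ :=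
  ∫ r in (0:ℝ)..1, r * ρ r * (1 - cos (r * ω))

lemma sq_mul_lambdaDelta2 (ρ : ℝ → ℝ) {δ : ℝ} (hδ : δ ≠ 0) (κ : ℝ) :
    δ ^ 2 * lambdaDelta2 ρ δ κ = 4 * ∫ θ in (0:ℝ)..π / 2, radialSymbol ρ (δ * κ * cos θ) := by
  rw [lambdaDelta2, ← mul_assoc, mul_div_cancel₀ _ (pow_ne_zero 2 hδ)]
  simp only [radialSymbol, mul_assoc]

section radialSymbol

variable {ρ : ℝ → ℝ}

lemma mul_apply_nonneg_of_mem_Icc (hρ : ∀ r ∈ Ioc (0:ℝ) 1, 0 ≤ ρ r) {r : ℝ}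
    (hr : r ∈ Icc 0 1) : 0 ≤ r * ρ r := by
  rcases hr.1.eq_or_lt with rfl | hr0
  · simp
  · exact mul_nonneg hr0.le (hρ r ⟨hr0, hr.2⟩)

lemma mul_mul_one_sub_cos_nonneg (hρ : ∀ r ∈ Ioc (0:ℝ) 1, 0 ≤ ρ r) {r : ℝ} (hr : r ∈ Icc 0 1)
    (x : ℝ) : 0 ≤ r * ρ r * (1 - cos x) :=
  mul_nonneg (mul_apply_nonneg_of_mem_Icc hρ hr) (by linarith [cos_le_one x])

lemma intervalIntegrable_mul_one_sub_cos (hρi : IntervalIntegrable (fun r => r * ρ r) volume 0 1)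
    (ω : ℝ) : IntervalIntegrable (fun r => r * ρ r * (1 - cos (r * ω))) volume 0 1 :=
  hρi.mul_continuousOn (by fun_prop)

lemma integral_le_radialSymbol (hρ : ∀ r ∈ Ioc (0:ℝ) 1, 0 ≤ ρ r)
    (hρi : IntervalIntegrable (fun r => r * ρ r) volume 0 1) {a : ℝ} (ha : a ∈ Icc 0 1) (ω : ℝ) :
    ∫ r in (0:ℝ)..a, r * ρ r * (1 - cos (r * ω)) ≤ radialSymbol ρ ω :=
  integral_mono_interval le_rfl ha.1 ha.2
    (ae_restrict_of_forall_mem measurableSet_Ioc fun _ hr =>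
      mul_mul_one_sub_cos_nonneg hρ (Ioc_subset_Icc_self hr) _)
    (intervalIntegrable_mul_one_sub_cos hρi ω)

lemma radialSymbol_nonneg (hρ : ∀ r ∈ Ioc (0:ℝ) 1, 0 ≤ ρ r) (ω : ℝ) : 0 ≤ radialSymbol ρ ω :=
  integral_nonneg zero_le_one fun _ hr => mul_mul_one_sub_cos_nonneg hρ hr _

lemma continuous_radialSymbol (hρ : ∀ r ∈ Ioc (0:ℝ) 1, 0 ≤ ρ r)
    (hρi : IntervalIntegrable (fun r => r * ρ r) volume 0 1) : Continuous (radialSymbol ρ) := by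
  refine continuous_of_dominated_interval (bound := fun r => 2 * (r * ρ r))
    (fun ω => (intervalIntegrable_mul_one_sub_cos hρi ω).def'.aestronglyMeasurable)
    (fun ω => Filter.Eventually.of_forall fun r hr => ?_) (hρi.const_mul 2)
    (Filter.Eventually.of_forall fun _ _ => by fun_prop)
  rw [uIoc_of_le zero_le_one] at hr
  have hr' : 0 ≤ r * ρ r := mul_nonneg hr.1.le (hρ r hr)
  rw [Real.norm_eq_abs, abs_of_nonneg (mul_mul_one_sub_cos_nonneg hρ (Ioc_subset_Icc_self hr) _)]
  nlinarith [neg_one_le_cos (r * ω)]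

lemma mul_le_integral_radialSymbol (hρ : ∀ r ∈ Ioc (0:ℝ) 1, 0 ≤ ρ r)
    (hρi : IntervalIntegrable (fun r => r * ρ r) volume 0 1) (s : ℝ) {α β L : ℝ} (hα : 0 ≤ α)
    (hαβ : α ≤ β) (hβ : β ≤ π / 2) (hL : ∀ θ ∈ Icc α β, L ≤ radialSymbol ρ (s * cos θ)) :
    (β - α) * L ≤ ∫ θ in (0:ℝ)..π / 2, radialSymbol ρ (s * cos θ) := by
  have hcont : Continuous fun θ => radialSymbol ρ (s * cos θ) :=
    (continuous_radialSymbol hρ hρi).comp (by fun_prop)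
  have hint (a b : ℝ) := hcont.intervalIntegrable (μ := volume) a b
  calc (β - α) * L = ∫ _ in α..β, L := by simp
    _ ≤ ∫ θ in α..β, radialSymbol ρ (s * cos θ) :=
        integral_mono_on hαβ intervalIntegrable_const (hint α β) hL
    _ ≤ ∫ θ in (0:ℝ)..π / 2, radialSymbol ρ (s * cos θ) :=
        integral_mono_interval hα hαβ hβ
          (Filter.Eventually.of_forall fun _ => radialSymbol_nonneg hρ _) (hint 0 (π / 2))

lemma integral_mul_one_sub_cos_le_radialSymbol (hρ : ∀ r ∈ Ioc (0:ℝ) 1, 0 ≤ ρ r)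
    (hρi : IntervalIntegrable (fun r => r * ρ r) volume 0 1) {rs ω : ℝ} (hrs : rs ∈ Icc 0 1)
    (hω : 1 ≤ ω) (hrsω : rs * (ω - 1) ≤ 2 * π - 2) :
    ∫ r in (0:ℝ)..rs, r * ρ r * (1 - cos r) ≤ radialSymbol ρ ω := by
  have hint : IntervalIntegrable (fun r => r * ρ r) volume 0 rs := hρi.mono_set <| by
    rw [uIcc_of_le hrs.1, uIcc_of_le zero_le_one]; exact Icc_subset_Icc le_rfl hrs.2
  refine le_trans (integral_mono_on hrs.1 (hint.mul_continuousOn (by fun_prop))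
    (hint.mul_continuousOn (by fun_prop)) fun r hr => ?_) (integral_le_radialSymbol hρ hρi hrs ω)
  have hcos : cos (r * ω) ≤ cos r := by
    refine cos_le_cos_of_le_of_le_two_pi_sub hr.1 (le_mul_of_one_le_right hr.1 hω) ?_
    nlinarith [mul_le_mul_of_nonneg_right hr.2 (sub_nonneg.2 hω), hr.2.trans hrs.2]
  exact mul_le_mul_of_nonneg_left (by linarith)
    (mul_apply_nonneg_of_mem_Icc hρ ⟨hr.1, hr.2.trans hrs.2⟩)

lemma mul_integral_le_integral_radialSymbol_of_window (hρ : ∀ r ∈ Ioc (0:ℝ) 1, 0 ≤ ρ r)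
    (hρi : IntervalIntegrable (fun r => r * ρ r) volume 0 1) {rs s C : ℝ} (hrs : rs ∈ Icc 0 1)
    (hs : 1 ≤ s) (hC : 0 ≤ C) (hCs : C ≤ arccos (1 / s)) (hrsC : rs * (s * C) ≤ 2 * π - 2) :
    C * ∫ r in (0:ℝ)..rs, r * ρ r * (1 - cos r) ≤
      ∫ θ in (0:ℝ)..π / 2, radialSymbol ρ (s * cos θ) := by
  set β := arccos (1 / s)
  have hs0 : 0 < s := by linarith
  have hcosβ : cos β = 1 / s :=
    cos_arccos (by linarith [show 0 < 1 / s by positivity]) (by rwa [div_le_one hs0])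
  -- on `[β - C, β]` the frequency `s cos θ` stays in `[1, 1 + s C]`
  suffices h : ∀ θ ∈ Icc (β - C) β,
      ∫ r in (0:ℝ)..rs, r * ρ r * (1 - cos r) ≤ radialSymbol ρ (s * cos θ) by
    simpa only [sub_sub_cancel] using mul_le_integral_radialSymbol hρ hρi s (α := β - C) (β := β)
      (by linarith) (by linarith) (arccos_le_pi_div_two.2 (by positivity)) h
  intro θ hθ
  have hθπ : θ ≤ π := hθ.2.trans (arccos_le_pi _)
  have hlow : 1 / s ≤ cos θ :=
    hcosβ ▸ cos_le_cos_of_nonneg_of_le_pi (by linarith [hθ.1]) (arccos_le_pi _) hθ.2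
  have hup : cos θ ≤ 1 / s + C := by
    have h₁ := cos_le_cos_of_nonneg_of_le_pi (by linarith [hθ.1]) hθπ hθ.1
    have h₂ := (abs_le.1 (abs_cos_sub_cos_le (β - C) β)).2
    rw [hcosβ, sub_sub_cancel_left, abs_neg, abs_of_nonneg hC] at h₂
    linarith
  refine integral_mul_one_sub_cos_le_radialSymbol hρ hρi hrs ?_ (le_trans ?_ hrsC)
  · simpa [hs0.ne'] using mul_le_mul_of_nonneg_left hlow hs0.le
  · refine mul_le_mul_of_nonneg_left ?_ hrs.1
    have := mul_le_mul_of_nonneg_left hup hs0.le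
    rw [mul_add, mul_one_div_cancel hs0.ne'] at this
    linarith

lemma integral_le_radialSymbol_of_monotoneOn (hρ : ∀ r ∈ Ioc (0:ℝ) 1, 0 ≤ ρ r)
    (hρi : IntervalIntegrable (fun r => r * ρ r) volume 0 1) {rs ω : ℝ} (hrs : rs ∈ Icc 0 1)
    (hmono : MonotoneOn (fun r => r * ρ r) (Icc 0 rs)) (hω : 7 * π ≤ 2 * rs * ω) :
    ∫ r in (0:ℝ)..3 / 7 * rs, r * ρ r ≤ radialSymbol ρ ω := by
  obtain ⟨hrs0, hrs1⟩ := hrs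
  have hω0 : 0 < ω := pos_of_mul_pos_right (by linarith [pi_pos] : 0 < rs * ω) hrs0
  have hp : 2 * π / ω ≤ 4 / 7 * rs := by rw [div_le_iff₀ hω0]; linarith
  have hp0 : 0 < 2 * π / ω := by positivity
  calc ∫ r in (0:ℝ)..3 / 7 * rs, r * ρ r ≤ ∫ r in (0:ℝ)..rs - 2 * π / ω, r * ρ r := by
        refine integral_mono_interval le_rfl (by linarith) (by linarith)
          (ae_restrict_of_forall_mem measurableSet_Ioc fun r hr => ?_) (hρi.mono_set ?_)
        · exact mul_apply_nonneg_of_mem_Icc hρ ⟨hr.1.le, by linarith [hr.2]⟩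
        · rw [uIcc_of_le (by linarith), uIcc_of_le zero_le_one]
          exact Icc_subset_Icc le_rfl (by linarith)
    _ ≤ ∫ r in (0:ℝ)..rs - 2 * π / ω + 2 * π / ω, r * ρ r * (1 - cos (r * ω)) :=
        hmono.integral_le_integral_mul_one_sub_cos hω0 (by simp) (by linarith) (by linarith)
    _ ≤ radialSymbol ρ ω := by
        rw [sub_add_cancel]
        exact integral_le_radialSymbol hρ hρi ⟨hrs0, hrs1⟩ ω

lemma pi_div_four_mul_integral_le_integral_radialSymbol (hρ : ∀ r ∈ Ioc (0:ℝ) 1, 0 ≤ ρ r)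
    (hρi : IntervalIntegrable (fun r => r * ρ r) volume 0 1) {rs s : ℝ} (hrs : rs ∈ Icc 0 1)
    (hmono : MonotoneOn (fun r => r * ρ r) (Icc 0 rs)) (hs : 5 * π ≤ rs * s) :
    π / 4 * ∫ r in (0:ℝ)..3 / 7 * rs, r * ρ r ≤
      ∫ θ in (0:ℝ)..π / 2, radialSymbol ρ (s * cos θ) := by
  suffices h : ∀ θ ∈ Icc 0 (π / 4),
      ∫ r in (0:ℝ)..3 / 7 * rs, r * ρ r ≤ radialSymbol ρ (s * cos θ) by
    simpa using mul_le_integral_radialSymbol hρ hρi s le_rfl (by positivity)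
      (by linarith [pi_pos]) h
  intro θ hθ
  refine integral_le_radialSymbol_of_monotoneOn hρ hρi hrs hmono ?_
  have hcos : √2 / 2 ≤ cos θ :=
    cos_pi_div_four ▸ cos_le_cos_of_nonneg_of_le_pi hθ.1 (by linarith [pi_pos]) hθ.2
  have hsqrt : 7 / 5 ≤ √2 := le_sqrt_of_sq_le (by norm_num)
  nlinarith [pi_pos]

end radialSymbol

theorem lambdaDelta2_caseII_bound_general (ρ : ℝ → ℝ)
    (hnonneg : ∀ r ∈ Set.Ioc (0:ℝ) 1, 0 ≤ ρ r)
    (hint1 : IntervalIntegrable (fun r => r * ρ r) volume 0 1)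
    (rs : ℝ) (hrs : rs ∈ Set.Ioc (0:ℝ) 1)
    (hmono : MonotoneOn (fun r => r * ρ r) (Set.Ioc (0:ℝ) rs))
    (δ : ℝ) (k : ℤ × ℤ)
    (hlarge : π ≤ δ * knorm2 k) :
    min (4 * (Real.arccos (1 / 3) - π / 3) *
          (∫ r in (0:ℝ)..rs, r * ρ r * (1 - Real.cos r)))
        (min (π * ∫ r in (rs / Real.sqrt 2)..rs, r * ρ r)
             (π * ∫ r in (0:ℝ)..((3 / 7) * rs), r * ρ r))
      ≤ δ ^ 2 * lambdaDelta2 ρ δ (knorm2 k) := by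
  have hδ : δ ≠ 0 := by rintro rfl; linarith [pi_pos]
  rw [sq_mul_lambdaDelta2 ρ hδ]
  set s := δ * knorm2 k
  have hrs' : rs ∈ Icc 0 1 := Ioc_subset_Icc_self hrs
  have hmono' : MonotoneOn (fun r => r * ρ r) (Icc 0 rs) := hmono.Icc_of_Ioc fun r hr => by
    simpa using mul_apply_nonneg_of_mem_Icc hnonneg ⟨hr.1.le, hr.2.trans hrs.2⟩
  -- `5π` is a threshold `t` with both `t (π/6 - 1/3) ≤ 2π - 2` and `√2 t ≥ 7π`
  rcases le_or_gt (rs * s) (5 * π) with hsmall | hbig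
  · refine (min_le_left _ _).trans ?_
    have hs : 3 ≤ s := by linarith [pi_gt_three]
    have hC : arccos (1 / 3) - π / 3 ≤ arccos (1 / s) :=
      (sub_le_self _ (by positivity)).trans (arccos_le_arccos (by gcongr))
    have hrsC : rs * (s * (arccos (1 / 3) - π / 3)) ≤ 2 * π - 2 := by
      rw [← mul_assoc]
      exact mul_arccos_one_third_sub_pi_div_three_le (mul_nonneg hrs.1.le (by linarith)) hsmall
    have := mul_integral_le_integral_radialSymbol_of_window hnonneg hint1 hrs' (by linarith)
      arccos_one_third_sub_pi_div_three_nonneg hC hrsC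
    linarith
  · refine ((min_le_right _ _).trans (min_le_right _ _)).trans ?_
    have := pi_div_four_mul_integral_le_integral_radialSymbol hnonneg hint1 hrs' hmono' hbig.le
    linarith

theorem lambdaDelta2_caseII_bound (ρ : ℝ → ℝ) (hmeas : Measurable ρ)
    (hnonneg : ∀ r ∈ Set.Ioc (0:ℝ) 1, 0 ≤ ρ r)
    (hint3 : IntervalIntegrable (fun r => r ^ 3 * ρ r) volume 0 1)
    (hint1 : IntervalIntegrable (fun r => r * ρ r) volume 0 1)
    (rs : ℝ) (hrs : rs ∈ Set.Ioc (0:ℝ) 1)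
    (hmono : MonotoneOn (fun r => r * ρ r) (Set.Ioc (0:ℝ) rs))
    (δ : ℝ) (hδ : 0 < δ) (k : ℤ × ℤ) (hk : k ≠ 0)
    (hlarge : π ≤ δ * knorm2 k) :
    min (4 * (Real.arccos (1 / 3) - π / 3) *
          (∫ r in (0:ℝ)..rs, r * ρ r * (1 - Real.cos r)))
        (min (π * ∫ r in (rs / Real.sqrt 2)..rs, r * ρ r)
             (π * ∫ r in (0:ℝ)..((3 / 7) * rs), r * ρ r))
      ≤ δ ^ 2 * lambdaDelta2 ρ δ (knorm2 k) :=
  lambdaDelta2_caseII_bound_general ρ hnonneg hint1 rs hrs hmono δ k hlarge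
end

section
/- Let ρ : (0,1] → ℝ be a measurable function with ρ(r) > 0 for almost every r ∈ (0,1], such that r ↦ r³ρ(r) and r ↦ r ρ(r) are integrable on (0,1) and the second-moment normalization ∫₀¹ r³ρ(r) dr = 2/π holds. Suppose there is r* ∈ (0,1] such that the map r ↦ r ρ(r) is monotone (either nonincreasing or nondecreasing) on (0, r*]. Then there exists a constant C > 0, independent of δ and k, such that for every δ > 0 and every k ∈ ℤ² \ {0}: λ_δ(k) > 0 and |1/λ_δ(k) − 1/|k|²| ≤ C δ². -/
/-!
Put `w(r) = r ρ(r)` on `(0, 1]` and `H(u) = ∫ w(x) (1 - cos (u x)) dx`, so that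
`λ_δ(k) = (4/δ²) F(δ|k|)` with the angular average `F(a) = ∫₀^{π/2} H(a cos θ) dθ`, and
`1/λ_δ(k) - 1/|k|² = δ² (1/(4 F(a)) - 1/a²)` for `a = δ|k|`. It therefore suffices to bound
`1/(4 F(a)) - 1/a²` uniformly in `a > 0`.

The Taylor bounds `x²/2 - x⁴/24 ≤ 1 - cos x ≤ x²/2`, the normalization `∫ x² w = 2/π` and
`∫ x⁴ w ≤ ∫ x² w` give `a²/4 - a⁴/48 ≤ F(a) ≤ a²/4`, which handles `a ≤ 2`. For large `a`,
`H` is continuous, positive away from `0`, and tends to `∫ w > 0` by the Riemann–Lebesgue lemma,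
so it is bounded below on `[1, ∞)`; since `a cos θ ≥ 1` for `θ ≤ π/3` once `a ≥ 2`, `F(a)` is
bounded below by a positive constant there.
-/

open Real MeasureTheory

open Filter Topology

lemma Real.cos_le_one_sub_sq_div_two_add (x : ℝ) : cos x ≤ 1 - x ^ 2 / 2 + x ^ 4 / 24 := by
  wlog hx : 0 ≤ x
  · have := this (-x) (by linarith)
    rwa [cos_neg, neg_sq, show (-x) ^ 4 = x ^ 4 by ring] at this
  have hderiv (t : ℝ) : HasDerivAt (fun t => 1 - t ^ 2 / 2 + t ^ 4 / 24 - cos t)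
      (-t + t ^ 3 / 6 + sin t) t := by
    refine ((((hasDerivAt_pow 2 t).div_const 2).const_sub 1).add
      ((hasDerivAt_pow 4 t).div_const 24)).sub (hasDerivAt_cos t) |>.congr_deriv ?_
    norm_num
    ring
  have hmono : MonotoneOn (fun t => 1 - t ^ 2 / 2 + t ^ 4 / 24 - cos t) (Set.Ici 0) :=
    monotoneOn_of_hasDerivWithinAt_nonneg (convex_Ici 0) (by fun_prop)
      (fun t _ => (hderiv t).hasDerivWithinAt)
      (fun t ht => by linarith [sin_ge_sub_cube (interior_subset ht : (0:ℝ) ≤ t)])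
  simpa using hmono Set.self_mem_Ici hx hx

lemma tendsto_integral_mul_cos_atTop {g : ℝ → ℝ} (hg : Integrable g) :
    Tendsto (fun u => ∫ x, g x * cos (u * x)) atTop (𝓝 0) := by
  have hRL := (Complex.continuous_re.tendsto 0).comp
    (Real.tendsto_integral_exp_smul_cocompact (fun x => (g x : ℂ)))
  have hscale : Tendsto (fun u : ℝ => -(u / (2 * π))) atTop (cocompact ℝ) :=
    (tendsto_neg_atTop_atBot.comp (tendsto_id.atTop_div_const (by positivity))).mono_right
      atBot_le_cocompact
  refine (hRL.comp hscale).congr fun u => ?_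
  simp only [Function.comp_apply]
  have hint : Integrable (fun x => Real.fourierChar (-(x * -(u / (2 * π)))) • (g x : ℂ)) := by
    simpa [mul_comm] using (Real.fourierIntegral_convergent_iff (-(u / (2 * π)))).2 hg.ofReal
  rw [← RCLike.re_to_complex, ← integral_re hint]
  congr 1 with x
  rw [Circle.smul_def, Real.fourierChar_apply, RCLike.re_to_complex, smul_eq_mul,
    Complex.re_mul_ofReal, Complex.exp_ofReal_mul_I_re]
  rw [mul_comm (g x)]
  congr 2
  field_simp

lemma exists_pos_forall_le_of_tendsto_atTop {f : ℝ → ℝ} {a M : ℝ}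
    (hf : ContinuousOn f (Set.Ici a)) (hpos : ∀ u ∈ Set.Ici a, 0 < f u)
    (hlim : Tendsto f atTop (𝓝 M)) (hM : 0 < M) :
    ∃ c > 0, ∀ u ∈ Set.Ici a, c ≤ f u := by
  obtain ⟨U, hU⟩ := eventually_atTop.1 (hlim.eventually (eventually_ge_nhds (half_lt_self hM)))
  obtain ⟨v, hv, hvmin⟩ := isCompact_Icc.exists_isMinOn (Set.nonempty_Icc.2 (le_max_left a U))
    (hf.mono Set.Icc_subset_Ici_self)
  refine ⟨min (f v) (M / 2), lt_min (hpos v hv.1) (half_pos hM), fun u hu => ?_⟩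
  rcases le_total u (max a U) with h | h
  · exact (min_le_left _ _).trans (hvmin ⟨hu, h⟩)
  · exact (min_le_right _ _).trans (hU u ((le_max_right _ _).trans h))

noncomputable def oneSubCosTransform (g : ℝ → ℝ) (u : ℝ) : ℝ :=
  ∫ x, g x * (1 - cos (u * x))

section OneSubCosTransform

variable {g : ℝ → ℝ}

lemma norm_one_sub_cos_le_two (y : ℝ) : ‖1 - cos y‖ ≤ 2 := by
  rw [Real.norm_eq_abs, abs_le]
  constructor <;> linarith [cos_le_one y, neg_one_le_cos y]

lemma integrable_mul_one_sub_cos (hg : Integrable g) (u : ℝ) :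
    Integrable fun x => g x * (1 - cos (u * x)) :=
  hg.mul_bdd (by fun_prop) (ae_of_all _ fun x => norm_one_sub_cos_le_two (u * x))

lemma continuous_oneSubCosTransform (hg : Integrable g) : Continuous (oneSubCosTransform g) :=
  continuous_of_dominated (fun u => (integrable_mul_one_sub_cos hg u).aestronglyMeasurable)
    (fun u => ae_of_all _ fun x => by
      rw [norm_mul, mul_comm]
      exact mul_le_mul_of_nonneg_right (norm_one_sub_cos_le_two _) (norm_nonneg _))
    (hg.norm.const_mul 2) (ae_of_all _ fun _ => by fun_prop)

lemma oneSubCosTransform_nonneg (hg0 : 0 ≤ᵐ[volume] g) (u : ℝ) : 0 ≤ oneSubCosTransform g u :=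
  integral_nonneg_of_ae <| hg0.mono fun _ hx => mul_nonneg hx (sub_nonneg.2 (cos_le_one _))

lemma oneSubCosTransform_le (hg0 : 0 ≤ᵐ[volume] g) (hg : Integrable g)
    (hg₂ : Integrable fun x => x ^ 2 * g x) (u : ℝ) :
    oneSubCosTransform g u ≤ u ^ 2 / 2 * ∫ x, x ^ 2 * g x := by
  rw [← integral_const_mul]
  refine integral_mono_ae (integrable_mul_one_sub_cos hg u) (hg₂.const_mul _)
    (hg0.mono fun x hx => ?_)
  have := one_sub_sq_div_two_le_cos (x := u * x)
  calc g x * (1 - cos (u * x)) ≤ g x * ((u * x) ^ 2 / 2) := by gcongr; linarith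
    _ = u ^ 2 / 2 * (x ^ 2 * g x) := by ring

lemma le_oneSubCosTransform (hg0 : 0 ≤ᵐ[volume] g) (hg : Integrable g)
    (hg₂ : Integrable fun x => x ^ 2 * g x) (hg₄ : Integrable fun x => x ^ 4 * g x) (u : ℝ) :
    u ^ 2 / 2 * (∫ x, x ^ 2 * g x) - u ^ 4 / 24 * (∫ x, x ^ 4 * g x) ≤
      oneSubCosTransform g u := by
  rw [← integral_const_mul, ← integral_const_mul,
    ← integral_sub (hg₂.const_mul _) (hg₄.const_mul _)]
  refine integral_mono_ae ((hg₂.const_mul _).sub (hg₄.const_mul _))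
    (integrable_mul_one_sub_cos hg u) (hg0.mono fun x hx => ?_)
  have := cos_le_one_sub_sq_div_two_add (u * x)
  calc u ^ 2 / 2 * (x ^ 2 * g x) - u ^ 4 / 24 * (x ^ 4 * g x)
      = g x * ((u * x) ^ 2 / 2 - (u * x) ^ 4 / 24) := by ring
    _ ≤ g x * (1 - cos (u * x)) := mul_le_mul_of_nonneg_left (by linarith) hx

lemma oneSubCosTransform_pos (hg0 : 0 ≤ᵐ[volume] g) (hg : Integrable g)
    (hsupp : 0 < volume (Function.support g)) {u : ℝ} (hu : u ≠ 0) :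
    0 < oneSubCosTransform g u := by
  have hnull : volume {x | cos (u * x) = 1} = 0 := by
    refine measure_mono_null (fun x hx => ?_)
      ((Set.countable_range fun n : ℤ => n * (2 * π) / u).measure_zero _)
    obtain ⟨n, hn⟩ := (cos_eq_one_iff _).1 hx
    exact ⟨n, by rw [div_eq_iff hu, hn, mul_comm]⟩
  rw [oneSubCosTransform, integral_pos_iff_support_of_nonneg_ae
    (hg0.mono fun x hx => mul_nonneg hx (sub_nonneg.2 (cos_le_one _)))
    (integrable_mul_one_sub_cos hg u)]
  refine hsupp.trans_le ((measure_sdiff_null hnull).symm.trans_le (measure_mono ?_))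
  rintro x ⟨hgx, hcos⟩
  exact mul_ne_zero hgx (sub_ne_zero.2 (Ne.symm hcos))

lemma tendsto_oneSubCosTransform_atTop (hg : Integrable g) :
    Tendsto (oneSubCosTransform g) atTop (𝓝 (∫ x, g x)) := by
  have hsplit : oneSubCosTransform g = fun u => (∫ x, g x) - ∫ x, g x * cos (u * x) := by
    ext u
    rw [oneSubCosTransform, ← integral_sub hg (hg.mul_bdd (by fun_prop)
      (ae_of_all _ fun x => abs_cos_le_one (u * x)))]
    simp only [mul_one_sub]
  simpa [hsplit] using tendsto_const_nhds.sub (tendsto_integral_mul_cos_atTop hg)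

lemma exists_pos_forall_le_oneSubCosTransform (hg0 : 0 ≤ᵐ[volume] g) (hg : Integrable g)
    (hsupp : 0 < volume (Function.support g)) {u₀ : ℝ} (hu₀ : 0 < u₀) :
    ∃ c > 0, ∀ u ∈ Set.Ici u₀, c ≤ oneSubCosTransform g u :=
  exists_pos_forall_le_of_tendsto_atTop (continuous_oneSubCosTransform hg).continuousOn
    (fun _ hu => oneSubCosTransform_pos hg0 hg hsupp (hu₀.trans_le hu).ne')
    (tendsto_oneSubCosTransform_atTop hg)
    ((integral_pos_iff_support_of_nonneg_ae hg0 hg).2 hsupp)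

end OneSubCosTransform

noncomputable def angularAverage (h : ℝ → ℝ) (a : ℝ) : ℝ :=
  ∫ θ in (0 : ℝ)..(π / 2), h (a * cos θ)

lemma integral_cos_sq_zero_pi_div_two : ∫ θ in (0 : ℝ)..(π / 2), cos θ ^ 2 = π / 4 := by
  simp [integral_cos_sq]
  ring

section AngularAverage

variable {h : ℝ → ℝ}

lemma intervalIntegrable_comp_mul_cos (hh : Continuous h) (a s t : ℝ) :
    IntervalIntegrable (fun θ => h (a * cos θ)) volume s t :=
  Continuous.intervalIntegrable (by fun_prop) _ _

lemma angularAverage_le (hh : Continuous h) {A : ℝ} (hle : ∀ u, h u ≤ A * u ^ 2) (a : ℝ) :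
    angularAverage h a ≤ π / 4 * A * a ^ 2 := by
  calc angularAverage h a ≤ ∫ θ in (0 : ℝ)..(π / 2), A * a ^ 2 * cos θ ^ 2 :=
        intervalIntegral.integral_mono_on (by positivity) (intervalIntegrable_comp_mul_cos hh _ _ _)
          (Continuous.intervalIntegrable (by fun_prop) _ _) fun θ _ => (hle _).trans_eq (by ring)
    _ = π / 4 * A * a ^ 2 := by
        rw [intervalIntegral.integral_const_mul, integral_cos_sq_zero_pi_div_two]; ring

lemma le_angularAverage (hh : Continuous h) {A B : ℝ} (hB : 0 ≤ B)
    (hge : ∀ u, A * u ^ 2 - B * u ^ 4 ≤ h u) (a : ℝ) :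
    π / 4 * A * a ^ 2 - π / 4 * B * a ^ 4 ≤ angularAverage h a := by
  have hcos4 : ∫ θ in (0 : ℝ)..(π / 2), cos θ ^ 4 ≤ π / 4 := by
    rw [← integral_cos_sq_zero_pi_div_two]
    refine intervalIntegral.integral_mono_on (by positivity)
      (Continuous.intervalIntegrable (by fun_prop) _ _)
      (Continuous.intervalIntegrable (by fun_prop) _ _) fun θ _ => ?_
    nlinarith [cos_sq_le_one θ, sq_nonneg (cos θ)]
  calc π / 4 * A * a ^ 2 - π / 4 * B * a ^ 4
      ≤ A * a ^ 2 * (π / 4) - B * a ^ 4 * ∫ θ in (0 : ℝ)..(π / 2), cos θ ^ 4 := by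
        nlinarith [mul_le_mul_of_nonneg_left hcos4 (by positivity : 0 ≤ B * a ^ 4)]
    _ = ∫ θ in (0 : ℝ)..(π / 2), (A * a ^ 2 * cos θ ^ 2 - B * a ^ 4 * cos θ ^ 4) := by
        rw [intervalIntegral.integral_sub (Continuous.intervalIntegrable (by fun_prop) _ _)
          (Continuous.intervalIntegrable (by fun_prop) _ _),
          intervalIntegral.integral_const_mul, intervalIntegral.integral_const_mul,
          integral_cos_sq_zero_pi_div_two]
    _ ≤ angularAverage h a :=
        intervalIntegral.integral_mono_on (by positivity)
          (Continuous.intervalIntegrable (by fun_prop) _ _)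
          (intervalIntegrable_comp_mul_cos hh _ _ _) fun θ _ => (hge _).trans_eq' (by ring)

lemma le_angularAverage_of_two_le (hh : Continuous h) (h0 : ∀ u, 0 ≤ h u) {c : ℝ}
    (hc : ∀ u ∈ Set.Ici 1, c ≤ h u) {a : ℝ} (ha : 2 ≤ a) :
    π / 3 * c ≤ angularAverage h a := by
  have hint := intervalIntegrable_comp_mul_cos hh a
  rw [angularAverage, ← intervalIntegral.integral_add_adjacent_intervals (hint 0 (π / 3))
    (hint (π / 3) (π / 2))]
  have hnear : π / 3 * c ≤ ∫ θ in (0 : ℝ)..(π / 3), h (a * cos θ) := by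
    calc π / 3 * c = ∫ _ in (0 : ℝ)..(π / 3), c := by simp
      _ ≤ ∫ θ in (0 : ℝ)..(π / 3), h (a * cos θ) :=
          intervalIntegral.integral_mono_on (by positivity) intervalIntegrable_const
            (hint _ _) fun θ hθ => hc _ ?_
    have hcos : 1 / 2 ≤ cos θ := by
      rw [← cos_pi_div_three]
      exact cos_le_cos_of_nonneg_of_le_pi hθ.1 (by linarith [pi_pos]) hθ.2
    show 1 ≤ a * cos θ
    nlinarith
  have hfar : 0 ≤ ∫ θ in (π / 3)..(π / 2), h (a * cos θ) :=
    intervalIntegral.integral_nonneg (by linarith [pi_pos]) fun θ _ => h0 _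
  linarith

end AngularAverage

lemma abs_one_div_four_mul_sub_one_div_sq_le {a F c : ℝ} (ha : 0 < a) (hc : 0 < c)
    (hle : F ≤ a ^ 2 / 4) (hge : a ^ 2 / 4 - a ^ 4 / 48 ≤ F) (hbig : 2 ≤ a → c ≤ F) :
    0 < F ∧ |1 / (4 * F) - 1 / a ^ 2| ≤ max (1 / 8) (1 / (4 * c)) := by
  rcases le_total a 2 with hsmall | hlarge
  · have ha2 : a ^ 2 ≤ 4 := by nlinarith
    have hF : a ^ 2 / 6 ≤ F := by nlinarith [mul_le_mul_of_nonneg_right ha2 (sq_nonneg a)]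
    have hFpos : 0 < F := by linarith [pow_pos ha 2]
    refine ⟨hFpos, le_max_of_le_left ?_⟩
    rw [abs_le, div_sub_div _ _ (by positivity) (by positivity), le_div_iff₀ (by positivity),
      div_le_iff₀ (by positivity)]
    constructor <;> nlinarith [pow_pos ha 2]
  · have hF := hbig hlarge
    have hFpos : 0 < F := hc.trans_le hF
    refine ⟨hFpos, le_max_of_le_right ?_⟩
    rw [abs_of_nonneg (sub_nonneg.2 (one_div_le_one_div_of_le (by positivity) (by linarith)))]
    calc 1 / (4 * F) - 1 / a ^ 2 ≤ 1 / (4 * F) := by linarith [one_div_pos.2 (pow_pos ha 2)]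
      _ ≤ 1 / (4 * c) := one_div_le_one_div_of_le (by positivity) (by linarith)

lemma one_le_knorm2 {k : ℤ × ℤ} (hk : k ≠ 0) : 1 ≤ knorm2 k := by
  have hsq : (1 : ℤ) ≤ k.1 ^ 2 + k.2 ^ 2 := by
    rcases k with ⟨m, n⟩
    have : m ≠ 0 ∨ n ≠ 0 := by contrapose! hk; simp [hk.1, hk.2]
    rcases this with h | h
    · linarith [sq_pos_of_ne_zero h, sq_nonneg n]
    · linarith [sq_pos_of_ne_zero h, sq_nonneg m]
  rw [knorm2, Real.one_le_sqrt]
  exact_mod_cast hsq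

noncomputable def radialWeight (ρ : ℝ → ℝ) : ℝ → ℝ :=
  (Set.Ioc 0 1).indicator fun r => r * ρ r

section RadialWeight

variable {ρ : ℝ → ℝ}

lemma lambdaDelta2_eq_angularAverage (ρ : ℝ → ℝ) (δ κ : ℝ) :
    lambdaDelta2 ρ δ κ =
      4 / δ ^ 2 * angularAverage (oneSubCosTransform (radialWeight ρ)) (δ * κ) := by
  rw [lambdaDelta2, angularAverage]
  congr 1
  refine intervalIntegral.integral_congr fun θ _ => ?_
  rw [intervalIntegral.integral_of_le zero_le_one, ← integral_indicator measurableSet_Ioc,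
    oneSubCosTransform]
  congr 1 with r
  simp only [radialWeight, Set.indicator_apply]
  split_ifs <;> ring_nf

lemma pow_mul_radialWeight (ρ : ℝ → ℝ) (n : ℕ) :
    (fun x => x ^ n * radialWeight ρ x) = (Set.Ioc 0 1).indicator fun r => r ^ n * (r * ρ r) :=
  funext fun _ => (Set.indicator_mul_right _ (· ^ n) _).symm

lemma integrable_pow_mul_radialWeight (hint : IntervalIntegrable (fun r => r * ρ r) volume 0 1)
    (n : ℕ) : Integrable fun x => x ^ n * radialWeight ρ x := by
  rw [pow_mul_radialWeight]
  exact (hint.1.continuousOn_mul_of_subset (continuous_pow n).continuousOn isCompact_Icc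
    measurableSet_Ioc Set.Ioc_subset_Icc_self).integrable_indicator measurableSet_Ioc

lemma integrable_radialWeight (hint : IntervalIntegrable (fun r => r * ρ r) volume 0 1) :
    Integrable (radialWeight ρ) :=
  hint.1.integrable_indicator measurableSet_Ioc

lemma radialWeight_pos_ae (hpos : ∀ᵐ r ∂(volume.restrict (Set.Ioc (0 : ℝ) 1)), 0 < ρ r) :
    ∀ᵐ r ∂(volume.restrict (Set.Ioc (0 : ℝ) 1)), 0 < radialWeight ρ r := by
  filter_upwards [hpos, ae_restrict_mem measurableSet_Ioc] with r hr hmem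
  rw [radialWeight, Set.indicator_of_mem hmem]
  exact mul_pos hmem.1 hr

lemma radialWeight_nonneg_ae (hpos : ∀ᵐ r ∂(volume.restrict (Set.Ioc (0 : ℝ) 1)), 0 < ρ r) :
    0 ≤ᵐ[volume] radialWeight ρ := by
  filter_upwards [(ae_restrict_iff' measurableSet_Ioc).1 (radialWeight_pos_ae hpos)] with r hr
  by_cases hmem : r ∈ Set.Ioc 0 1
  · exact (hr hmem).le
  · rw [Pi.zero_apply, radialWeight, Set.indicator_of_notMem hmem]

lemma volume_support_radialWeight_pos
    (hpos : ∀ᵐ r ∂(volume.restrict (Set.Ioc (0 : ℝ) 1)), 0 < ρ r) :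
    0 < volume (Function.support (radialWeight ρ)) := by
  have hmem : ∀ᵐ r ∂(volume.restrict (Set.Ioc (0 : ℝ) 1)), r ∈ Function.support (radialWeight ρ) :=
    (radialWeight_pos_ae hpos).mono fun _ hr => hr.ne'
  calc 0 < volume.restrict (Set.Ioc (0 : ℝ) 1) Set.univ := by simp
    _ = volume.restrict (Set.Ioc (0 : ℝ) 1) (Function.support (radialWeight ρ)) :=
        (measure_congr (eventuallyEq_univ.2 hmem)).symm
    _ ≤ volume (Function.support (radialWeight ρ)) := Measure.restrict_apply_le _ _

lemma integral_sq_mul_radialWeight (ρ : ℝ → ℝ) :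
    ∫ x, x ^ 2 * radialWeight ρ x = ∫ r in (0 : ℝ)..1, r ^ 3 * ρ r := by
  rw [pow_mul_radialWeight, integral_indicator measurableSet_Ioc,
    intervalIntegral.integral_of_le zero_le_one]
  congr 1 with r
  ring

lemma integral_pow_four_mul_radialWeight_le
    (hpos : ∀ᵐ r ∂(volume.restrict (Set.Ioc (0 : ℝ) 1)), 0 < ρ r)
    (hint : IntervalIntegrable (fun r => r * ρ r) volume 0 1) :
    ∫ x, x ^ 4 * radialWeight ρ x ≤ ∫ x, x ^ 2 * radialWeight ρ x := by
  refine integral_mono_ae (integrable_pow_mul_radialWeight hint 4)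
    (integrable_pow_mul_radialWeight hint 2) ?_
  filter_upwards [radialWeight_nonneg_ae hpos] with r hr
  by_cases hmem : r ∈ Set.Ioc 0 1
  · have : r ^ 4 ≤ r ^ 2 := pow_le_pow_of_le_one hmem.1.le hmem.2 (by norm_num)
    exact mul_le_mul_of_nonneg_right this hr
  · simp [radialWeight, Set.indicator_of_notMem hmem]

lemma oneSubCosTransform_radialWeight_le
    (hpos : ∀ᵐ r ∂(volume.restrict (Set.Ioc (0 : ℝ) 1)), 0 < ρ r)
    (hint : IntervalIntegrable (fun r => r * ρ r) volume 0 1)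
    (hmoment : ∫ r in (0 : ℝ)..1, r ^ 3 * ρ r = 2 / π) (u : ℝ) :
    oneSubCosTransform (radialWeight ρ) u ≤ 1 / π * u ^ 2 := by
  have h := oneSubCosTransform_le (radialWeight_nonneg_ae hpos) (integrable_radialWeight hint)
    (integrable_pow_mul_radialWeight hint 2) u
  rw [integral_sq_mul_radialWeight, hmoment] at h
  exact h.trans_eq (by field_simp)

lemma le_oneSubCosTransform_radialWeight
    (hpos : ∀ᵐ r ∂(volume.restrict (Set.Ioc (0 : ℝ) 1)), 0 < ρ r)
    (hint : IntervalIntegrable (fun r => r * ρ r) volume 0 1)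
    (hmoment : ∫ r in (0 : ℝ)..1, r ^ 3 * ρ r = 2 / π) (u : ℝ) :
    1 / π * u ^ 2 - 1 / (12 * π) * u ^ 4 ≤ oneSubCosTransform (radialWeight ρ) u := by
  have h := le_oneSubCosTransform (radialWeight_nonneg_ae hpos) (integrable_radialWeight hint)
    (integrable_pow_mul_radialWeight hint 2) (integrable_pow_mul_radialWeight hint 4) u
  have hm₄ := integral_pow_four_mul_radialWeight_le hpos hint
  rw [integral_sq_mul_radialWeight, hmoment] at h hm₄
  have := mul_le_mul_of_nonneg_left hm₄ (by positivity : 0 ≤ u ^ 4 / 24)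
  field_simp at this h ⊢
  linarith

end RadialWeight

theorem lambdaDelta2_asymptotic_compatibility_general (ρ : ℝ → ℝ)
    (hpos : ∀ᵐ r ∂(volume.restrict (Set.Ioc (0:ℝ) 1)), 0 < ρ r)
    (hint1 : IntervalIntegrable (fun r => r * ρ r) volume 0 1)
    (hmoment : (∫ r in (0:ℝ)..1, r ^ 3 * ρ r) = 2 / π) :
    ∃ C : ℝ, 0 < C ∧ ∀ δ : ℝ, 0 < δ → ∀ k : ℤ × ℤ, k ≠ 0 →
      0 < lambdaDelta2 ρ δ (knorm2 k) ∧
      |1 / lambdaDelta2 ρ δ (knorm2 k) - 1 / (knorm2 k) ^ 2| ≤ C * δ ^ 2 := by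
  simp only [lambdaDelta2_eq_angularAverage]
  set H := oneSubCosTransform (radialWeight ρ)
  have hw0 := radialWeight_nonneg_ae hpos
  have hH : Continuous H := continuous_oneSubCosTransform (integrable_radialWeight hint1)
  obtain ⟨c, hc, hcH⟩ := exists_pos_forall_le_oneSubCosTransform hw0
    (integrable_radialWeight hint1) (volume_support_radialWeight_pos hpos) one_pos
  refine ⟨max (1 / 8) (1 / (4 * (π / 3 * c))), by positivity, fun δ hδ k hk => ?_⟩
  have hκ : 0 < knorm2 k := one_pos.trans_le (one_le_knorm2 hk)
  obtain ⟨hF, hbound⟩ := abs_one_div_four_mul_sub_one_div_sq_le (mul_pos hδ hκ) (by positivity)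
    ((angularAverage_le hH (oneSubCosTransform_radialWeight_le hpos hint1 hmoment) _).trans_eq
      (by field_simp))
    ((le_angularAverage hH (by positivity)
      (le_oneSubCosTransform_radialWeight hpos hint1 hmoment) _).trans_eq' (by field_simp; ring))
    (le_angularAverage_of_two_le hH (oneSubCosTransform_nonneg hw0) hcH)
  have hdiff : 1 / (4 / δ ^ 2 * angularAverage H (δ * knorm2 k)) - 1 / knorm2 k ^ 2 =
      δ ^ 2 * (1 / (4 * angularAverage H (δ * knorm2 k)) - 1 / (δ * knorm2 k) ^ 2) := by
    field_simp
  refine ⟨by positivity, ?_⟩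
  rw [hdiff, abs_mul, abs_of_nonneg (sq_nonneg δ), mul_comm]
  exact mul_le_mul_of_nonneg_right hbound (sq_nonneg δ)

theorem lambdaDelta2_asymptotic_compatibility (ρ : ℝ → ℝ) (hmeas : Measurable ρ)
    (hpos : ∀ᵐ r ∂(volume.restrict (Set.Ioc (0:ℝ) 1)), 0 < ρ r)
    (hint3 : IntervalIntegrable (fun r => r ^ 3 * ρ r) volume 0 1)
    (hint1 : IntervalIntegrable (fun r => r * ρ r) volume 0 1)
    (hmoment : (∫ r in (0:ℝ)..1, r ^ 3 * ρ r) = 2 / π)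
    (rs : ℝ) (hrs : rs ∈ Set.Ioc (0:ℝ) 1)
    (hmonotone : AntitoneOn (fun r => r * ρ r) (Set.Ioc (0:ℝ) rs) ∨
                 MonotoneOn (fun r => r * ρ r) (Set.Ioc (0:ℝ) rs)) :
    ∃ C : ℝ, 0 < C ∧ ∀ δ : ℝ, 0 < δ → ∀ k : ℤ × ℤ, k ≠ 0 →
      0 < lambdaDelta2 ρ δ (knorm2 k) ∧
      |1 / lambdaDelta2 ρ δ (knorm2 k) - 1 / (knorm2 k) ^ 2| ≤ C * δ ^ 2 :=
  lambdaDelta2_asymptotic_compatibility_general ρ hpos hint1 hmoment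
end
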